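/- arXiv:1807.11778 — 7 statements merged into one kernel-verified Lean document; each statement's English description precedes it below -/
import Mathlib

section
/- Let d ≥ 1 be an integer, δ > 0, and let a : (0,∞) → ℝ satisfy a(t) = o(t) as t → ∞, and set R(t) = δt + a(t). Then, as t → ∞, ∫_{{y ∈ ℝ^d : |y| ≥ R(t)}} (2πt)^{-d/2} exp(−|y|²/(2t)) dy ∼ (ω_d/(2π)^{d/2}) · e^{−R(t)²/(2t)} · (R(t)/√t)^{d−2}, i.e., the ratio of the two sides tends to 1. -/
/-!
In polar coordinates, after the substitution `r = √t s`, the Gaussian tail becomes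
`ω_d / (2π)^{d/2} · ∫_x^∞ s^{d-1} e^{-s²/2} ds` with `x = R(t)/√t`, and `x → ∞` because
`R(t)/t → δ > 0`. By l'Hôpital's rule `∫_x^∞ s^n e^{-s²/2} ds ∼ x^{n-1} e^{-x²/2}`, the ratio of
the derivatives being `x² / (x² - (n - 1))`.
-/

open Real MeasureTheory Filter Set Topology Metric Module

theorem hasDerivAt_integral_Ioi {E : Type*} [NormedAddCommGroup E] [NormedSpace ℝ E]
    [CompleteSpace E] {f : ℝ → E} {a x : ℝ} (hf : IntegrableOn f (Ioi a))
    (hfx : ContinuousAt f x) (hax : a < x) :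
    HasDerivAt (fun y => ∫ s in Ioi y, f s) (-f x) x := by
  have hint : HasDerivAt (fun y => ∫ s in a..y, f s) (f x) x :=
    intervalIntegral.integral_hasDerivAt_right
      ((intervalIntegrable_iff_integrableOn_Ioc_of_le hax.le).2
        (hf.mono_set Ioc_subset_Ioi_self))
      (AEStronglyMeasurable.stronglyMeasurableAtFilter_of_mem hf.aestronglyMeasurable
        (Ioi_mem_nhds hax)) hfx
  refine (hint.const_sub (∫ s in Ioi a, f s)).congr_of_eventuallyEq ?_
  filter_upwards [Ioi_mem_nhds hax] with y hy
  rw [← intervalIntegral.integral_Ioi_sub_Ioi hf (le_of_lt hy), sub_sub_cancel]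

theorem hasDerivAt_rpow_mul_exp_neg_sq_div_two (p : ℝ) {x : ℝ} (hx : 0 < x) :
    HasDerivAt (fun x => x ^ p * exp (-x ^ 2 / 2))
      (x ^ (p - 1) * (p - x ^ 2) * exp (-x ^ 2 / 2)) x := by
  have hquad : HasDerivAt (fun x : ℝ => -x ^ 2 / 2) (-x) x := by
    refine ((hasDerivAt_pow 2 x).neg.div_const 2).congr_deriv ?_
    ring
  refine ((hasDerivAt_rpow_const (p := p) (Or.inl hx.ne')).mul hquad.exp).congr_deriv ?_
  rw [show x ^ p = x ^ (p - 1) * x by rw [← rpow_add_one hx.ne', sub_add_cancel]]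
  ring

theorem tendsto_rpow_mul_exp_neg_sq_div_two_atTop (p : ℝ) :
    Tendsto (fun x : ℝ => x ^ p * exp (-x ^ 2 / 2)) atTop (𝓝 0) := by
  refine ((tendsto_rpow_mul_exp_neg_mul_atTop_nhds_zero (p / 2) (1 / 2) (by norm_num)).comp
    (tendsto_pow_atTop two_ne_zero)).congr' ?_
  filter_upwards [eventually_gt_atTop 0] with x hx
  simp only [Function.comp_apply, ← rpow_natCast, ← rpow_mul hx.le]
  ring_nf

theorem tendsto_sq_div_sq_sub_atTop (c : ℝ) :
    Tendsto (fun x : ℝ => x ^ 2 / (x ^ 2 - c)) atTop (𝓝 1) := by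
  have hden : Tendsto (fun x : ℝ => x ^ 2 - c) atTop atTop :=
    tendsto_atTop_add_const_right _ (-c) (tendsto_pow_atTop two_ne_zero)
  have := ((tendsto_const_nhds (x := c)).div_atTop hden).const_add 1
  rw [add_zero] at this
  refine this.congr' ?_
  filter_upwards [hden.eventually_gt_atTop 0] with x hx
  field_simp
  ring

theorem integrableOn_pow_mul_exp_neg_sq_div_two (n : ℕ) :
    IntegrableOn (fun s : ℝ => s ^ n * exp (-s ^ 2 / 2)) (Ioi 0) := by
  refine (integrableOn_rpow_mul_exp_neg_mul_sq (b := 1 / 2) (by norm_num)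
    (s := n) (by linarith [n.cast_nonneg (α := ℝ)])).congr_fun (fun x _ => ?_) measurableSet_Ioi
  simp only [rpow_natCast]
  ring_nf

noncomputable def gaussianMomentTail (n : ℕ) (x : ℝ) : ℝ := ∫ s in Ioi x, s ^ n * exp (-s ^ 2 / 2)

theorem hasDerivAt_gaussianMomentTail (n : ℕ) {x : ℝ} (hx : 0 < x) :
    HasDerivAt (gaussianMomentTail n) (-(x ^ n * exp (-x ^ 2 / 2))) x :=
  hasDerivAt_integral_Ioi (integrableOn_pow_mul_exp_neg_sq_div_two n) (by fun_prop) hx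

theorem tendsto_gaussianMomentTail_atTop (n : ℕ) :
    Tendsto (gaussianMomentTail n) atTop (𝓝 0) :=
  tendsto_integral_Ioi_zero tendsto_id

theorem tendsto_gaussianMomentTail_div_atTop (n : ℕ) :
    Tendsto (fun x => gaussianMomentTail n x / (x ^ ((n : ℝ) - 1) * exp (-x ^ 2 / 2)))
      atTop (𝓝 1) := by
  have hlarge : ∀ᶠ x : ℝ in atTop, 0 < x ∧ (n : ℝ) - 1 < x ^ 2 :=
    (eventually_gt_atTop 0).and
      ((tendsto_pow_atTop two_ne_zero).eventually_gt_atTop ((n : ℝ) - 1))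
  refine HasDerivAt.lhopital_zero_atTop
    (hlarge.mono fun x hx => hasDerivAt_gaussianMomentTail n hx.1)
    (hlarge.mono fun x hx => hasDerivAt_rpow_mul_exp_neg_sq_div_two _ hx.1)
    (hlarge.mono fun x hx => ?_) (tendsto_gaussianMomentTail_atTop n)
    (tendsto_rpow_mul_exp_neg_sq_div_two_atTop _)
    ((tendsto_sq_div_sq_sub_atTop ((n : ℝ) - 1)).congr' (hlarge.mono fun x hx => ?_))
  · exact mul_ne_zero (mul_ne_zero (rpow_pos_of_pos hx.1 _).ne' (by linarith [hx.2]))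
      (exp_pos _).ne'
  · have hpow : x ^ n = x ^ ((n : ℝ) - 1 - 1) * x ^ 2 := by
      rw [← rpow_natCast, ← rpow_two, ← rpow_add hx.1]
      ring_nf
    simp only [hpow]
    have hx' := (rpow_pos_of_pos hx.1 ((n : ℝ) - 1 - 1)).ne'
    have hgap : (n : ℝ) - 1 - x ^ 2 ≠ 0 := by linarith [hx.2]
    have hgap' : x ^ 2 - ((n : ℝ) - 1) ≠ 0 := by linarith [hx.2]
    field_simp
    ring

theorem integral_Ioi_pow_mul_exp_neg_sq_div (n : ℕ) {t : ℝ} (ht : 0 < t) (R : ℝ) :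
    ∫ r in Ioi R, r ^ n * exp (-r ^ 2 / (2 * t))
      = √t ^ (n + 1) * gaussianMomentTail n (R / √t) := by
  have hs : 0 < √t := sqrt_pos.2 ht
  have hsub := integral_comp_mul_left_Ioi' (fun r => r ^ n * exp (-r ^ 2 / (2 * t))) (R / √t) hs
  rw [mul_div_cancel₀ _ hs.ne'] at hsub
  have hscale : ∀ x : ℝ, (√t * x) ^ n * exp (-(√t * x) ^ 2 / (2 * t))
      = √t ^ n * (x ^ n * exp (-x ^ 2 / 2)) := fun x => by
    rw [mul_pow, mul_pow, sq_sqrt ht.le, show -(t * x ^ 2) / (2 * t) = -x ^ 2 / 2 by field_simp]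
    ring
  simp only [hscale, integral_const_mul, smul_eq_mul] at hsub
  rw [← hsub, pow_succ', mul_assoc]
  rfl

theorem setIntegral_le_norm_fun_norm_addHaar {E F : Type*} [NormedAddCommGroup E] [NormedSpace ℝ E]
    [FiniteDimensional ℝ E] [Nontrivial E] [MeasurableSpace E] [BorelSpace E]
    [NormedAddCommGroup F] [NormedSpace ℝ F]
    (μ : Measure E) [μ.IsAddHaarMeasure] (f : ℝ → F) {R : ℝ} (hR : 0 ≤ R) :
    ∫ x in {x : E | R ≤ ‖x‖}, f ‖x‖ ∂μ
      = finrank ℝ E • μ.real (ball 0 1) • ∫ y in Ioi R, y ^ (finrank ℝ E - 1) • f y := by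
  have hind : {x : E | R ≤ ‖x‖}.indicator (fun x => f ‖x‖) = fun x => (Ici R).indicator f ‖x‖ := by
    ext x
    by_cases hx : R ≤ ‖x‖ <;> simp [indicator, hx]
  rw [← integral_indicator (measurableSet_le measurable_const measurable_norm), hind,
    integral_fun_norm_addHaar]
  congr 2
  simp_rw [← indicator_smul_apply (Ici R) (fun y : ℝ => y ^ (finrank ℝ E - 1)) f]
  rw [setIntegral_indicator measurableSet_Ici]
  rcases hR.eq_or_lt with rfl | hR
  · rw [inter_eq_left.2 Ioi_subset_Ici_self]
  · rw [inter_eq_right.2 (Ici_subset_Ioi.2 hR), integral_Ici_eq_integral_Ioi]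

theorem sqrt_pow_eq_rpow {x : ℝ} (hx : 0 ≤ x) (n : ℕ) : √x ^ n = x ^ ((n : ℝ) / 2) := by
  rw [rpow_div_two_eq_sqrt _ hx, rpow_natCast]

theorem finrank_mul_volumeReal_ball_one (E : Type*) [NormedAddCommGroup E] [InnerProductSpace ℝ E]
    [FiniteDimensional ℝ E] [Nontrivial E] [MeasurableSpace E] [BorelSpace E] :
    (finrank ℝ E : ℝ) * volume.real (ball (0 : E) 1)
      = 2 * π ^ ((finrank ℝ E : ℝ) / 2) / Gamma ((finrank ℝ E : ℝ) / 2) := by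
  have hn : (0 : ℝ) < finrank ℝ E := Nat.cast_pos.2 finrank_pos
  have hΓ : 0 < Gamma ((finrank ℝ E : ℝ) / 2) := Gamma_pos_of_pos (by positivity)
  rw [measureReal_def, InnerProductSpace.volume_ball, ENNReal.ofReal_one, one_pow, one_mul,
    ENNReal.toReal_ofReal (by positivity), Gamma_add_one (by positivity),
    sqrt_pow_eq_rpow pi_pos.le]
  field_simp

theorem two_pi_mul_rpow_neg_half_mul_sqrt_pow (n : ℕ) {t : ℝ} (ht : 0 < t) :
    (2 * π * t) ^ (-(n : ℝ) / 2) * √t ^ n = ((2 * π) ^ ((n : ℝ) / 2))⁻¹ := by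
  rw [sqrt_pow_eq_rpow ht.le, neg_div, rpow_neg (by positivity), mul_rpow (by positivity) ht.le,
    mul_inv, inv_mul_cancel_right₀ (rpow_pos_of_pos ht _).ne']

theorem setIntegral_le_norm_gaussian {E : Type*} [NormedAddCommGroup E] [InnerProductSpace ℝ E]
    [FiniteDimensional ℝ E] [Nontrivial E] [MeasurableSpace E] [BorelSpace E]
    {t R : ℝ} (ht : 0 < t) (hR : 0 ≤ R) :
    ∫ y in {y : E | R ≤ ‖y‖}, (2 * π * t) ^ (-(finrank ℝ E : ℝ) / 2) * exp (-‖y‖ ^ 2 / (2 * t))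
      = 2 * π ^ ((finrank ℝ E : ℝ) / 2) / Gamma ((finrank ℝ E : ℝ) / 2)
          / (2 * π) ^ ((finrank ℝ E : ℝ) / 2) * gaussianMomentTail (finrank ℝ E - 1) (R / √t) := by
  rw [integral_const_mul,
    setIntegral_le_norm_fun_norm_addHaar volume (fun r => exp (-r ^ 2 / (2 * t))) hR]
  simp only [smul_eq_mul, nsmul_eq_mul]
  rw [integral_Ioi_pow_mul_exp_neg_sq_div _ ht, Nat.sub_add_cancel finrank_pos,
    ← finrank_mul_volumeReal_ball_one, div_eq_mul_inv _ ((2 * π) ^ _),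
    ← two_pi_mul_rpow_neg_half_mul_sqrt_pow _ ht]
  ring

theorem tendsto_div_sqrt_atTop {R : ℝ → ℝ} {δ : ℝ} (hδ : 0 < δ)
    (hR : Tendsto (fun t => R t / t) atTop (𝓝 δ)) :
    Tendsto (fun t => R t / √t) atTop atTop := by
  refine (tendsto_sqrt_atTop.atTop_mul_pos hδ hR).congr' ?_
  filter_upwards [eventually_gt_atTop 0] with t ht
  have := (sqrt_pos.2 ht).ne'
  field_simp
  rw [sq_sqrt ht.le, mul_comm]

/-- Let `d ≥ 1`, `δ > 0`, `a(t) = o(t)` as `t → ∞`, and `R(t) = δt + a(t)`. Then as `t → ∞`,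
`∫_{|y| ≥ R(t)} (2πt)^{-d/2} exp(−|y|²/(2t)) dy
  ∼ (ω_d/(2π)^{d/2}) e^{−R(t)²/(2t)} (R(t)/√t)^{d−2}`,
where `ω_d = 2π^{d/2}/Γ(d/2)` is the surface area of the unit sphere in `ℝ^d`. -/
theorem gaussian_tail_asymptotics (d : ℕ) (hd : 1 ≤ d) (δ : ℝ) (hδ : 0 < δ)
    (a : ℝ → ℝ) (ha : Tendsto (fun t => a t / t) atTop (nhds 0))
    (R : ℝ → ℝ) (hR : ∀ t, R t = δ * t + a t) :
    Tendsto (fun t : ℝ =>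
        (∫ y in {y : EuclideanSpace ℝ (Fin d) | R t ≤ ‖y‖},
            (2 * π * t) ^ (-(d : ℝ) / 2) * Real.exp (-‖y‖ ^ 2 / (2 * t)))
          / ((2 * π ^ ((d : ℝ) / 2) / Real.Gamma ((d : ℝ) / 2)) / (2 * π) ^ ((d : ℝ) / 2)
              * Real.exp (-(R t) ^ 2 / (2 * t)) * (R t / Real.sqrt t) ^ ((d : ℝ) - 2)))
      atTop (nhds 1) := by
  have : Nonempty (Fin d) := ⟨⟨0, hd⟩⟩
  have hRt : Tendsto (fun t => R t / t) atTop (𝓝 δ) := by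
    refine (add_zero δ ▸ ha.const_add δ).congr' ?_
    filter_upwards [eventually_ne_atTop 0] with t ht
    rw [hR, add_div, mul_div_cancel_right₀ _ ht]
  have hφ := tendsto_div_sqrt_atTop hδ hRt
  have hK : 2 * π ^ ((d : ℝ) / 2) / Gamma ((d : ℝ) / 2) / (2 * π) ^ ((d : ℝ) / 2) ≠ 0 := by
    have hΓ := Gamma_pos_of_pos (half_pos (Nat.cast_pos.2 hd : (0 : ℝ) < d))
    positivity
  refine ((tendsto_gaussianMomentTail_div_atTop (d - 1)).comp hφ).congr' ?_
  filter_upwards [eventually_gt_atTop 0, hφ.eventually_gt_atTop 0] with t ht hφt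
  have htail := setIntegral_le_norm_gaussian (E := EuclideanSpace ℝ (Fin d)) ht
    ((div_pos_iff_of_pos_right (sqrt_pos.2 ht)).1 hφt).le
  rw [finrank_euclideanSpace_fin] at htail
  have hexp : exp (-(R t / √t) ^ 2 / 2) = exp (-R t ^ 2 / (2 * t)) := by
    rw [div_pow, sq_sqrt ht.le, neg_div, div_div, mul_comm t, neg_div]
  have hpow : ((d - 1 : ℕ) : ℝ) - 1 = (d : ℝ) - 2 := by
    rw [Nat.cast_sub hd]
    ring
  rw [Function.comp_apply, htail, mul_assoc, mul_div_mul_left _ _ hK, hexp, hpow, mul_comm]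
end

section
/- For every integer d ≥ 1, every x ∈ ℝ^d, every t > 0 and every R ≥ 0, ∫_{{y : |y| ≥ R}} (2πt)^{-d/2} exp(−|x−y|²/(2t)) dy ≥ ∫_{{y : |y| ≥ R}} (2πt)^{-d/2} exp(−|y|²/(2t)) dy; equivalently, the Gaussian probability that a centered Gaussian vector with covariance t·Id started at x leaves the ball of radius R around the origin is minimized over starting points at x = 0. -/
/-!
By the layer-cake formula it suffices to compare, level by level, the measure outside the ball
`B = {‖y‖ < R}` of a superlevel set `T` of `y ↦ g ‖y‖` with that of its translate `x + T`.
Since `g` is radially decreasing, `T` is a centred ball-like set, hence either `B ⊆ T` or `T ⊆ B`.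
In the second case `T \ B` is empty; in the first, `μ (T \ B) = μ T - μ B`, while
`μ ((x + T) \ B) ≥ μ (x + T) - μ B` and `μ (x + T) = μ T`.
-/

open Real MeasureTheory Set
open scoped ENNReal

lemma measure_sdiff_le_measure_preimage_sub_sdiff {G : Type*} [AddGroup G] [MeasurableSpace G]
    [MeasurableAdd G] {μ : Measure G} [μ.IsAddRightInvariant] {A T : Set G}
    (hA : MeasurableSet A) (hA_fin : μ A ≠ ∞) (hAT : A ⊆ T ∨ T ⊆ A) (x : G) :
    μ (T \ A) ≤ μ ((fun y => y - x) ⁻¹' T \ A) := by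
  rcases hAT with hAT | hTA
  · calc μ (T \ A) = μ T - μ A := measure_sdiff hAT hA.nullMeasurableSet hA_fin
      _ = μ ((fun y => y - x) ⁻¹' T) - μ A := by
          simp_rw [sub_eq_add_neg, measure_preimage_add_right]
      _ ≤ _ := le_measure_sdiff
  · simp [sdiff_eq_empty.2 hTA]

lemma setOf_norm_lt_subset_or_subset_of_antitoneOn {E : Type*} [NormedAddCommGroup E] {g : ℝ → ℝ}
    (hg : AntitoneOn g (Ici 0)) (R s : ℝ) :
    {z : E | ‖z‖ < R} ⊆ {z | s < g ‖z‖} ∨ {z : E | s < g ‖z‖} ⊆ {z | ‖z‖ < R} := by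
  by_cases h : ∃ z : E, s < g ‖z‖ ∧ R ≤ ‖z‖
  · obtain ⟨z, hz, hRz⟩ := h
    exact Or.inl fun w hw => hz.trans_le (hg (norm_nonneg w) (norm_nonneg z) (hw.out.le.trans hRz))
  · push Not at h
    exact Or.inr h

theorem setLIntegral_norm_ge_le_setLIntegral_sub_of_antitoneOn {E : Type*} [NormedAddCommGroup E]
    [MeasurableSpace E] [BorelSpace E] [ProperSpace E] (μ : Measure E) [μ.IsAddRightInvariant]
    [IsFiniteMeasureOnCompacts μ] {g : ℝ → ℝ} (hg : AntitoneOn g (Ici 0))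
    (hg_nonneg : ∀ r, 0 ≤ g r) (hg_meas : Measurable g) (R : ℝ) (x : E) :
    ∫⁻ y in {y | R ≤ ‖y‖}, ENNReal.ofReal (g ‖y‖) ∂μ
      ≤ ∫⁻ y in {y | R ≤ ‖y‖}, ENNReal.ofReal (g ‖y - x‖) ∂μ := by
  have hS : MeasurableSet {y : E | R ≤ ‖y‖} := measurableSet_le measurable_const measurable_norm
  rw [lintegral_eq_lintegral_meas_lt _ (ae_of_all _ fun _ => hg_nonneg _) (by fun_prop),
    lintegral_eq_lintegral_meas_lt _ (ae_of_all _ fun _ => hg_nonneg _) (by fun_prop)]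
  refine lintegral_mono fun s => ?_
  rw [Measure.restrict_apply' hS, Measure.restrict_apply' hS]
  have hball : {z : E | ‖z‖ < R} = Metric.ball 0 R := by ext; simp
  have := measure_sdiff_le_measure_preimage_sub_sdiff (μ := μ) (T := {z : E | s < g ‖z‖})
    (measurableSet_lt measurable_norm measurable_const) (hball ▸ measure_ball_lt_top.ne)
    (setOf_norm_lt_subset_or_subset_of_antitoneOn hg R s) x
  convert this using 2 <;> ext y <;> simp [not_lt]

lemma antitoneOn_exp_neg_sq_div {t : ℝ} (ht : 0 < t) :
    AntitoneOn (fun r => exp (-r ^ 2 / (2 * t))) (Ici 0) := by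
  intro a ha b _ hab
  dsimp only
  gcongr

lemma integrable_exp_neg_sq_norm_div {V : Type*} [NormedAddCommGroup V] [InnerProductSpace ℝ V]
    [FiniteDimensional ℝ V] [MeasurableSpace V] [BorelSpace V] {t : ℝ} (ht : 0 < t) :
    Integrable (fun v : V => exp (-‖v‖ ^ 2 / (2 * t))) := by
  have hb : 0 < (2 * t)⁻¹ := by positivity
  refine Integrable.of_integral_ne_zero ?_
  have h_eq : (fun v : V => exp (-‖v‖ ^ 2 / (2 * t))) = fun v => exp (-(2 * t)⁻¹ * ‖v‖ ^ 2) := by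
    ext v; ring_nf
  rw [h_eq, GaussianFourier.integral_rexp_neg_mul_sq_norm hb]
  positivity

theorem gaussian_tail_ge_centered_general (d : ℕ) (x : EuclideanSpace ℝ (Fin d))
    (t R : ℝ) (ht : 0 < t) :
    (∫ y in {y : EuclideanSpace ℝ (Fin d) | R ≤ ‖y‖},
        (2 * π * t) ^ (-(d : ℝ) / 2) * Real.exp (-‖y‖ ^ 2 / (2 * t)))
      ≤ ∫ y in {y : EuclideanSpace ℝ (Fin d) | R ≤ ‖y‖},
          (2 * π * t) ^ (-(d : ℝ) / 2) * Real.exp (-‖x - y‖ ^ 2 / (2 * t)) := by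
  have hint_x : Integrable fun y => exp (-‖x - y‖ ^ 2 / (2 * t)) :=
    (integrable_exp_neg_sq_norm_div ht).comp_sub_left x
  rw [integral_const_mul, integral_const_mul]
  refine mul_le_mul_of_nonneg_left ?_ (by positivity)
  rw [integral_eq_lintegral_of_nonneg_ae (ae_of_all _ fun _ => (exp_pos _).le) (by fun_prop),
    integral_eq_lintegral_of_nonneg_ae (ae_of_all _ fun _ => (exp_pos _).le) (by fun_prop)]
  refine ENNReal.toReal_mono hint_x.integrableOn.lintegral_lt_top.ne ?_
  simp_rw [norm_sub_rev x]
  exact setLIntegral_norm_ge_le_setLIntegral_sub_of_antitoneOn volume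
    (antitoneOn_exp_neg_sq_div ht) (fun _ => (exp_pos _).le) (by fun_prop) R x

/-- For every `d ≥ 1`, `x ∈ ℝ^d`, `t > 0` and `R ≥ 0`, the Gaussian probability (centered at `x`,
covariance `t·Id`) of the complement of the ball of radius `R` around the origin is minimized at
`x = 0`. -/
theorem gaussian_tail_ge_centered (d : ℕ) (hd : 1 ≤ d) (x : EuclideanSpace ℝ (Fin d))
    (t R : ℝ) (ht : 0 < t) (hR : 0 ≤ R) :
    (∫ y in {y : EuclideanSpace ℝ (Fin d) | R ≤ ‖y‖},
        (2 * π * t) ^ (-(d : ℝ) / 2) * Real.exp (-‖y‖ ^ 2 / (2 * t)))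
      ≤ ∫ y in {y : EuclideanSpace ℝ (Fin d) | R ≤ ‖y‖},
          (2 * π * t) ^ (-(d : ℝ) / 2) * Real.exp (-‖x - y‖ ^ 2 / (2 * t)) :=
  gaussian_tail_ge_centered_general d x t R ht
end

section
/- Let d ≥ 1 be an integer, δ > 0, let a : (0,∞) → ℝ satisfy a(t) = o(t) as t → ∞, set R(t) = δt + a(t), and let K ⊂ ℝ^d be compact. Then there exist constants T > 0 and c > 0 such that for all x ∈ K and all t ≥ T one has |x| < R(t) and ∫_{{y : |y| ≥ R(t)}} (2πt)^{-d/2} exp(−|x−y|²/(2t)) dy ≤ c · e^{−R(t)²/(2t)} · (R(t)/√t)^{d−2}. -/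
/-!
If `‖x‖ ≤ m`, the triangle inequality puts the region `‖y‖ ≥ R` inside `‖y - x‖ ≥ R - m`, so after
translating and passing to polar coordinates the tail is at most a constant times
`t^{-d/2} ∫_{r}^∞ s^{d-1} e^{-s²/(2t)} ds` with `r = R - m`. Once `r² ≥ 2(d-1)t`, the factor
`s^{d-1}` grows slower than half the Gaussian decay rate at `r`, so this radial integral is at most
`(2t/r) r^{d-1} e^{-r²/(2t)}`. Since `R(t) ~ δt`, we eventually have `R/2 ≤ r ≤ R ≤ 2δt`, which
turns `(r/√t)^{d-2}` into at most `2 (R/√t)^{d-2}` and `e^{-r²/(2t)}` into at most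
`e^{2mδ} e^{-R²/(2t)}`.
-/

open Real MeasureTheory Filter Set Metric

lemma integral_Ioi_exp_neg_mul_sub {c : ℝ} (hc : 0 < c) (r : ℝ) :
    ∫ s in Ioi r, rexp (-c * (s - r)) = c⁻¹ := by
  simp_rw [mul_sub, sub_eq_add_neg, exp_add, neg_mul, neg_neg, ← neg_mul]
  rw [integral_mul_const, integral_exp_mul_Ioi (neg_lt_zero.2 hc), neg_div_neg_eq,
    div_mul_eq_mul_div, ← exp_add]
  simp

lemma pow_mul_exp_neg_sq_div_le {n : ℕ} {r s t : ℝ} (ht : 0 < t) (hr : 0 < r) (hrs : r ≤ s)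
    (h : 2 * n * t ≤ r ^ 2) :
    s ^ n * rexp (-s ^ 2 / (2 * t))
      ≤ r ^ n * rexp (-r ^ 2 / (2 * t)) * rexp (-(r / (2 * t)) * (s - r)) := by
  have hpow : s ^ n ≤ r ^ n * rexp (n * ((s - r) / r)) :=
    calc s ^ n = (r * ((s - r) / r + 1)) ^ n := by field_simp; ring
      _ ≤ (r * rexp ((s - r) / r)) ^ n := by
          gcongr
          exact add_one_le_exp _
      _ = r ^ n * rexp (n * ((s - r) / r)) := by rw [mul_pow, exp_nat_mul]
  -- `2nt ≤ r²` lets the growth rate `n / r` of `s ^ n` eat only half of the decay rate `r / t`.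
  have hexp : n * ((s - r) / r) + -s ^ 2 / (2 * t)
      ≤ -r ^ 2 / (2 * t) + -(r / (2 * t)) * (s - r) := by
    have hn : n * ((s - r) / r) ≤ r / (2 * t) * (s - r) :=
      calc n * ((s - r) / r) = n / r * (s - r) := by ring
        _ ≤ r / (2 * t) * (s - r) := by
          have : n / r ≤ r / (2 * t) := by
            rw [div_le_div_iff₀ hr (by positivity)]; linarith
          gcongr
    have hsq : -s ^ 2 / (2 * t) = -r ^ 2 / (2 * t) - r / t * (s - r) - (s - r) ^ 2 / (2 * t) := by
      field_simp; ring
    have : 0 ≤ (s - r) ^ 2 / (2 * t) := by positivity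
    have : r / t * (s - r) = 2 * (r / (2 * t) * (s - r)) := by field_simp
    linarith
  calc s ^ n * rexp (-s ^ 2 / (2 * t))
      ≤ r ^ n * rexp (n * ((s - r) / r)) * rexp (-s ^ 2 / (2 * t)) := by gcongr
    _ = r ^ n * rexp (n * ((s - r) / r) + -s ^ 2 / (2 * t)) := by rw [exp_add]; ring
    _ ≤ r ^ n * rexp (-r ^ 2 / (2 * t) + -(r / (2 * t)) * (s - r)) := by gcongr
    _ = _ := by rw [exp_add]; ring

lemma integral_Ioi_pow_mul_exp_neg_sq_div_le {n : ℕ} {r t : ℝ} (ht : 0 < t) (hr : 0 < r)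
    (h : 2 * n * t ≤ r ^ 2) :
    ∫ s in Ioi r, s ^ n * rexp (-s ^ 2 / (2 * t))
      ≤ 2 * t / r * r ^ n * rexp (-r ^ 2 / (2 * t)) := by
  have hc : 0 < r / (2 * t) := by positivity
  have hint := integral_Ioi_exp_neg_mul_sub hc r
  calc ∫ s in Ioi r, s ^ n * rexp (-s ^ 2 / (2 * t))
      ≤ ∫ s in Ioi r, r ^ n * rexp (-r ^ 2 / (2 * t)) * rexp (-(r / (2 * t)) * (s - r)) := by
        refine integral_mono_of_nonneg ?_ ?_ ?_
        · exact ae_restrict_of_forall_mem measurableSet_Ioi fun s (hs : r < s) =>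
            have := hr.trans hs; by positivity
        · exact (Integrable.of_integral_ne_zero (by rw [hint]; positivity)).const_mul _
        · exact ae_restrict_of_forall_mem measurableSet_Ioi fun s (hs : r < s) =>
            pow_mul_exp_neg_sq_div_le ht hr hs.le h
    _ = 2 * t / r * r ^ n * rexp (-r ^ 2 / (2 * t)) := by
        rw [integral_const_mul, hint, inv_div]; ring

lemma rpow_le_two_mul_rpow {p r s : ℝ} (hp : -1 ≤ p) (hr : 0 < r) (hrs : r ≤ s) (hs : s ≤ 2 * r) :
    r ^ p ≤ 2 * s ^ p := by
  have hsp : 0 ≤ s ^ p := rpow_nonneg (hr.le.trans hrs) p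
  rcases le_or_gt 0 p with hp0 | hp0
  · linarith [rpow_le_rpow hr.le hrs hp0]
  · calc r ^ p ≤ (s / 2) ^ p := rpow_le_rpow_of_nonpos (by linarith) (by linarith) hp0.le
      _ = 2 ^ (-p) * s ^ p := by rw [div_rpow (by linarith) zero_le_two, rpow_neg zero_le_two]; ring
      _ ≤ 2 ^ (1 : ℝ) * s ^ p := by gcongr <;> linarith
      _ = 2 * s ^ p := by rw [rpow_one]

lemma rpow_neg_half_mul_pow_eq {d : ℕ} (hd : 1 ≤ d) {r t : ℝ} (hr : 0 < r) (ht : 0 < t) :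
    (2 * π * t) ^ (-(d : ℝ) / 2) * (2 * t / r * r ^ (d - 1))
      = 2 * (2 * π) ^ (-(d : ℝ) / 2) * (r / √t) ^ ((d : ℝ) - 2) := by
  have hpow : r ^ (d - 1) = r ^ ((d : ℝ) - 2) * r := by
    rw [← rpow_natCast, ← rpow_add_one hr.ne', Nat.cast_sub hd]
    congr 1
    ring
  have hdiv : (r / √t) ^ ((d : ℝ) - 2) = r ^ ((d : ℝ) - 2) * t ^ (-(d : ℝ) / 2 + 1) := by
    rw [div_rpow hr.le (sqrt_nonneg _), sqrt_eq_rpow, ← rpow_mul ht.le, div_eq_mul_inv,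
      ← rpow_neg ht.le]
    congr 2
    ring
  rw [hpow, hdiv, mul_rpow (by positivity) ht.le, rpow_add_one ht.ne']
  field_simp

lemma exp_neg_sub_sq_div_le {m ρ t δ : ℝ} (hm : 0 ≤ m) (ht : 0 < t) (hρ : ρ ≤ 2 * δ * t) :
    rexp (-(ρ - m) ^ 2 / (2 * t)) ≤ rexp (2 * m * δ) * rexp (-ρ ^ 2 / (2 * t)) := by
  rw [← exp_add]
  gcongr
  rw [show 2 * m * δ + -ρ ^ 2 / (2 * t) = (4 * m * δ * t - ρ ^ 2) / (2 * t) by field_simp; ring,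
    div_le_div_iff_of_pos_right (by positivity)]
  nlinarith

section Radial

variable {E F : Type*} [NormedAddCommGroup E] [NormedSpace ℝ E] [FiniteDimensional ℝ E]
  [Nontrivial E] [MeasurableSpace E] [BorelSpace E] [NormedAddCommGroup F] [NormedSpace ℝ F]
  (μ : Measure E) [μ.IsAddHaarMeasure]

lemma setIntegral_fun_norm_addHaar_le_norm (f : ℝ → F) {r : ℝ} (hr : 0 < r) :
    ∫ z in {z : E | r ≤ ‖z‖}, f ‖z‖ ∂μ = Module.finrank ℝ E • μ.real (ball 0 1) •
      ∫ s in Ioi r, s ^ (Module.finrank ℝ E - 1) • f s := by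
  have hind : {z : E | r ≤ ‖z‖}.indicator (fun z => f ‖z‖) = fun z => (Ici r).indicator f ‖z‖ := by
    ext z; by_cases hz : r ≤ ‖z‖ <;> simp [hz]
  have hinter : Ioi (0 : ℝ) ∩ Ici r = Ici r := inter_eq_right.2 fun s hs => hr.trans_le hs
  rw [← integral_indicator (measurableSet_le measurable_const measurable_norm), hind,
    integral_fun_norm_addHaar]
  simp_rw [← indicator_smul_apply (Ici r) (fun s : ℝ => s ^ (Module.finrank ℝ E - 1)) f]
  rw [setIntegral_indicator measurableSet_Ici, hinter, integral_Ici_eq_integral_Ioi]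

end Radial

section Gaussian

variable {V : Type*} [NormedAddCommGroup V] [InnerProductSpace ℝ V] [FiniteDimensional ℝ V]
  [MeasurableSpace V] [BorelSpace V]

lemma integrable_exp_neg_mul_sq_norm {b : ℝ} (hb : 0 < b) :
    Integrable fun v : V => rexp (-b * ‖v‖ ^ 2) := by
  simpa [Complex.norm_exp, ← Complex.ofReal_pow] using
    (GaussianFourier.integrable_cexp_neg_mul_sq_norm_add (V := V)
      (show 0 < (b : ℂ).re from hb) 0 0).norm

lemma setIntegral_exp_neg_norm_sub_sq_le_of_le_sub_norm {t r ρ : ℝ} (ht : 0 < t) (x : V)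
    (hr : r ≤ ρ - ‖x‖) :
    ∫ y in {y : V | ρ ≤ ‖y‖}, rexp (-‖x - y‖ ^ 2 / (2 * t))
      ≤ ∫ z in {z : V | r ≤ ‖z‖}, rexp (-‖z‖ ^ 2 / (2 * t)) := by
  set g : V → ℝ := fun z => rexp (-‖z‖ ^ 2 / (2 * t))
  have hg : Integrable g := by
    simpa [g, neg_div, div_eq_inv_mul, mul_comm] using
      integrable_exp_neg_mul_sq_norm (V := V) (inv_pos.2 (mul_pos two_pos ht))
  calc ∫ y in {y : V | ρ ≤ ‖y‖}, g (x - y)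
      = ∫ y in {y : V | ρ ≤ ‖y‖}, g (y - x) := by simp only [g, norm_sub_rev x]
    _ ≤ ∫ y in (· - x) ⁻¹' {z : V | r ≤ ‖z‖}, g (y - x) := by
        refine setIntegral_mono_set (hg.comp_sub_right x).integrableOn
          (ae_of_all _ fun _ => (exp_pos _).le) (ae_of_all _ fun y (hy : ρ ≤ ‖y‖) => ?_)
        show r ≤ ‖y - x‖
        linarith [norm_sub_norm_le y x]
    _ = ∫ z in {z : V | r ≤ ‖z‖}, g z :=
        (measurePreserving_sub_right volume x).setIntegral_preimage_emb
          (MeasurableEquiv.subRight x).measurableEmbedding g _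

lemma setIntegral_exp_neg_norm_sub_sq_le_mul_exp [Nontrivial V] {t r ρ : ℝ} (ht : 0 < t) (x : V)
    (hr : 0 < r) (hrρ : r ≤ ρ - ‖x‖)
    (h : 2 * (Module.finrank ℝ V - 1 : ℕ) * t ≤ r ^ 2) :
    ∫ y in {y : V | ρ ≤ ‖y‖}, rexp (-‖x - y‖ ^ 2 / (2 * t))
      ≤ Module.finrank ℝ V * volume.real (ball (0 : V) 1) *
        (2 * t / r * r ^ (Module.finrank ℝ V - 1) * rexp (-r ^ 2 / (2 * t))) := by
  calc ∫ y in {y : V | ρ ≤ ‖y‖}, rexp (-‖x - y‖ ^ 2 / (2 * t))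
      ≤ ∫ z in {z : V | r ≤ ‖z‖}, rexp (-‖z‖ ^ 2 / (2 * t)) :=
        setIntegral_exp_neg_norm_sub_sq_le_of_le_sub_norm ht x hrρ
    _ = Module.finrank ℝ V * volume.real (ball (0 : V) 1) *
          ∫ s in Ioi r, s ^ (Module.finrank ℝ V - 1) * rexp (-s ^ 2 / (2 * t)) := by
        rw [setIntegral_fun_norm_addHaar_le_norm volume (fun s => rexp (-s ^ 2 / (2 * t))) hr]
        simp only [nsmul_eq_mul, smul_eq_mul, mul_assoc]
    _ ≤ _ := by
        gcongr
        exact integral_Ioi_pow_mul_exp_neg_sq_div_le ht hr h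

lemma gaussian_tail_le [Nontrivial V] {m δ t ρ : ℝ} (x : V) (hx : ‖x‖ ≤ m) (hm : 0 < m)
    (ht : 0 < t) (hρ : ρ ≤ 2 * δ * t) (hmρ : 2 * m ≤ ρ)
    (h : 2 * (Module.finrank ℝ V - 1 : ℕ) * t ≤ (ρ - m) ^ 2) :
    ∫ y in {y : V | ρ ≤ ‖y‖},
        (2 * π * t) ^ (-(Module.finrank ℝ V : ℝ) / 2) * rexp (-‖x - y‖ ^ 2 / (2 * t))
      ≤ 4 * Module.finrank ℝ V * volume.real (ball (0 : V) 1) *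
          (2 * π) ^ (-(Module.finrank ℝ V : ℝ) / 2) * rexp (2 * m * δ) *
          rexp (-ρ ^ 2 / (2 * t)) * (ρ / √t) ^ ((Module.finrank ℝ V : ℝ) - 2) := by
  set n := Module.finrank ℝ V
  set B := (volume : Measure V).real (ball 0 1)
  have hn : 1 ≤ n := Module.finrank_pos
  have hr : 0 < ρ - m := by linarith
  rw [integral_const_mul]
  calc (2 * π * t) ^ (-(n : ℝ) / 2) * ∫ y in {y : V | ρ ≤ ‖y‖}, rexp (-‖x - y‖ ^ 2 / (2 * t))
      ≤ (2 * π * t) ^ (-(n : ℝ) / 2) * (n * B *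
          (2 * t / (ρ - m) * (ρ - m) ^ (n - 1) * rexp (-(ρ - m) ^ 2 / (2 * t)))) := by
        gcongr
        exact setIntegral_exp_neg_norm_sub_sq_le_mul_exp ht x hr (by linarith) h
    _ = 2 * (2 * π) ^ (-(n : ℝ) / 2) * n * B *
          (((ρ - m) / √t) ^ ((n : ℝ) - 2) * rexp (-(ρ - m) ^ 2 / (2 * t))) := by
        linear_combination (n * B * rexp (-(ρ - m) ^ 2 / (2 * t))) *
          rpow_neg_half_mul_pow_eq hn hr ht
    _ ≤ 2 * (2 * π) ^ (-(n : ℝ) / 2) * n * B *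
          ((2 * (ρ / √t) ^ ((n : ℝ) - 2)) * (rexp (2 * m * δ) * rexp (-ρ ^ 2 / (2 * t)))) := by
        have hρt : 0 ≤ ρ / √t := div_nonneg (by linarith) (sqrt_nonneg t)
        refine mul_le_mul_of_nonneg_left (mul_le_mul ?_ ?_ (by positivity)
          (mul_nonneg zero_le_two (rpow_nonneg hρt _))) (by positivity)
        · have hn' : (1 : ℝ) ≤ n := by exact_mod_cast hn
          refine rpow_le_two_mul_rpow (by linarith) (div_pos hr (sqrt_pos.2 ht))
            (by gcongr; linarith) ?_
          rw [← mul_div_assoc]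
          gcongr
          linarith
        · exact exp_neg_sub_sq_div_le hm.le ht hρ
    _ = _ := by ring

end Gaussian

lemma eventually_half_mul_le_and_le_two_mul {δ : ℝ} (hδ : 0 < δ) {a : ℝ → ℝ}
    (ha : Tendsto (fun t => a t / t) atTop (nhds 0)) :
    ∀ᶠ t in atTop, δ / 2 * t ≤ δ * t + a t ∧ δ * t + a t ≤ 2 * δ * t := by
  filter_upwards [ha.eventually (Icc_mem_nhds (neg_lt_zero.2 (half_pos hδ)) (half_pos hδ)),
    eventually_gt_atTop 0] with t ht ht0
  rw [le_div_iff₀ ht0, div_le_iff₀ ht0] at ht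
  constructor <;> linarith [ht.1, ht.2]

lemma eventually_two_mul_le_and_mul_le_sq {δ : ℝ} (hδ : 0 < δ) {R : ℝ → ℝ}
    (hR : ∀ᶠ t in atTop, δ / 2 * t ≤ R t) (m κ : ℝ) :
    ∀ᶠ t in atTop, 2 * m ≤ R t ∧ κ * t ≤ (R t - m) ^ 2 := by
  filter_upwards [hR, eventually_gt_atTop 0, eventually_ge_atTop (4 * m / δ),
    eventually_ge_atTop (16 * κ / δ ^ 2)] with t hRt ht htm htκ
  rw [div_le_iff₀ hδ] at htm
  rw [div_le_iff₀ (by positivity)] at htκ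
  have hquarter : δ * t / 4 ≤ R t - m := by linarith
  refine ⟨by linarith, ?_⟩
  calc κ * t ≤ (δ * t / 4) ^ 2 := by nlinarith
    _ ≤ (R t - m) ^ 2 := by gcongr

/-- Let `d ≥ 1`, `δ > 0`, `a(t) = o(t)` as `t → ∞`, `R(t) = δt + a(t)`, and `K ⊂ ℝ^d` compact.
Then there are `T > 0` and `c > 0` such that for all `x ∈ K` and all `t ≥ T` one has
`|x| < R(t)` and `∫_{|y| ≥ R(t)} (2πt)^{-d/2} exp(−|x−y|²/(2t)) dy
  ≤ c e^{−R(t)²/(2t)} (R(t)/√t)^{d−2}`. -/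
theorem gaussian_tail_upper_uniform (d : ℕ) (hd : 1 ≤ d) (δ : ℝ) (hδ : 0 < δ)
    (a : ℝ → ℝ) (ha : Tendsto (fun t => a t / t) atTop (nhds 0))
    (R : ℝ → ℝ) (hR : ∀ t, R t = δ * t + a t)
    (K : Set (EuclideanSpace ℝ (Fin d))) (hK : IsCompact K) :
    ∃ T c : ℝ, 0 < T ∧ 0 < c ∧ ∀ x ∈ K, ∀ t : ℝ, T ≤ t →
      ‖x‖ < R t ∧
      (∫ y in {y : EuclideanSpace ℝ (Fin d) | R t ≤ ‖y‖},
          (2 * π * t) ^ (-(d : ℝ) / 2) * Real.exp (-‖x - y‖ ^ 2 / (2 * t)))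
        ≤ c * Real.exp (-(R t) ^ 2 / (2 * t)) * (R t / Real.sqrt t) ^ ((d : ℝ) - 2) := by
  have : Nonempty (Fin d) := ⟨⟨0, hd⟩⟩
  obtain ⟨m, hm, hmK⟩ := hK.isBounded.exists_pos_norm_le
  set B := (volume : Measure (EuclideanSpace ℝ (Fin d))).real (ball 0 1)
  have hB : 0 < B := ENNReal.toReal_pos (measure_ball_pos _ _ one_pos).ne' measure_ball_lt_top.ne
  have hRδ := eventually_half_mul_le_and_le_two_mul hδ ha
  simp only [← hR] at hRδ
  obtain ⟨T, hT⟩ := eventually_atTop.1 <| (eventually_gt_atTop 0).and <| hRδ.and <|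
    eventually_two_mul_le_and_mul_le_sq hδ (hRδ.mono fun _ => And.left) m (2 * (d - 1 : ℕ))
  refine ⟨max T 1, 4 * d * B * (2 * π) ^ (-(d : ℝ) / 2) * rexp (2 * m * δ), by positivity,
    by positivity, fun x hx t ht => ?_⟩
  obtain ⟨ht0, ⟨-, hRt⟩, hmR, hkey⟩ := hT t (le_of_max_le_left ht)
  refine ⟨by linarith [hmK x hx], ?_⟩
  simpa only [finrank_euclideanSpace_fin] using
    gaussian_tail_le x (hmK x hx) hm ht0 hRt hmR (by rwa [finrank_euclideanSpace_fin])
end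

section
/- Let d ≥ 1 be an integer, λ < 0, δ > √(−2λ), ε₁ ∈ (0, δ − √(−2λ)), and ε₂ > 0 with δ − ε₁ > √(2(−λ + ε₂)). Let a : (0,∞) → ℝ satisfy a(t) = o(t) as t → ∞ and set R(t) = δt + a(t). Then, as t → ∞, I(t) := (R(t) − ε₁t)^d ∫₀^t e^{(−λ+ε₂)s} (t − s)^{−(d+2)/2} exp(−(R(t) − ε₁t)²/(2(t − s))) ds ≍ e^{−(R(t)−ε₁t)²/(2t)} · t^{(d−2)/2}, i.e., there exist T, c₁, c₂ > 0 such that c₁ e^{−(R(t)−ε₁t)²/(2t)} t^{(d−2)/2} ≤ I(t) ≤ c₂ e^{−(R(t)−ε₁t)²/(2t)} t^{(d−2)/2} for all t ≥ T. -/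
open Real MeasureTheory Filter Set
open scoped Nat Topology

/-!
Write `b = R(t) - ε₁ t` and `μ = -λ + ε₂`. Since
`b² / (2(t - s)) - b² / (2t) = (b² / (2t²)) · ts / (t - s)` and `ts / (t - s) ≥ s`, the Gaussian
factor at time `t - s` is the one at time `t` times a penalty of at least `e^{-(b² / 2t²) s}`.
As `a(t) = o(t)`, eventually `b² / (2t²) ≥ γ` for a fixed `γ > μ` (this is `δ - ε₁ > √(2μ)`), so
the penalty beats the growth `e^{μ s}`: uniformly in `s`, the integrand is
`O(t^{-(d+2)/2} e^{-b²/(2t)} e^{-κ s})` for some `κ > 0`, and for `s ∈ (0, 1)` it is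
`≳ t^{-(d+2)/2} e^{-b²/(2t)}`. Multiplying by `b^d ≍ t^d` gives the claim.
-/

lemma exists_rpow_mul_exp_neg_le (q : ℝ) {κ : ℝ} (hκ : 0 < κ) :
    ∃ C, 0 < C ∧ ∀ x, 1 ≤ x → x ^ q * exp (-κ * x) ≤ C := by
  set n := ⌈q⌉₊
  refine ⟨n ! / κ ^ n, by positivity, fun x hx => ?_⟩
  have hxq : x ^ q ≤ x ^ n := by
    rw [← rpow_natCast]; exact rpow_le_rpow_of_exponent_le hx (Nat.le_ceil q)
  have hexp : (κ * x) ^ n / n ! ≤ exp (κ * x) := pow_div_factorial_le_exp _ (by positivity) n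
  rw [neg_mul, exp_neg, ← div_eq_mul_inv, div_le_iff₀ (exp_pos _)]
  calc x ^ q ≤ x ^ n := hxq
    _ = n ! / κ ^ n * ((κ * x) ^ n / n !) := by field_simp; ring
    _ ≤ n ! / κ ^ n * exp (κ * x) := by gcongr

lemma mul_sub_sq_div_le {μ γ b t s : ℝ} (hμ : 0 ≤ μ) (hb : 2 * γ * t ^ 2 ≤ b ^ 2)
    (hs : 0 < s) (hst : s < t) :
    μ * s - b ^ 2 / (2 * (t - s)) ≤ -b ^ 2 / (2 * t) - (γ - μ) * (t * s / (t - s)) := by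
  have hts : 0 < t - s := sub_pos.2 hst
  have ht : 0 < t := hs.trans hst
  have hgap : b ^ 2 / (2 * (t - s)) - b ^ 2 / (2 * t)
      = b ^ 2 / (2 * t ^ 2) * (t * s / (t - s)) := by
    field_simp; ring
  have hγ : γ ≤ b ^ 2 / (2 * t ^ 2) := by rw [le_div_iff₀ (by positivity)]; linarith
  have hs_le : s ≤ t * s / (t - s) := by rw [le_div_iff₀ hts]; nlinarith
  have hy : 0 ≤ t * s / (t - s) := by positivity
  rw [neg_div]
  nlinarith [mul_le_mul_of_nonneg_left hs_le hμ, mul_le_mul_of_nonneg_right hγ hy]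

lemma rpow_eq_rpow_mul_div_rpow_neg {t u : ℝ} (ht : 0 < t) (hu : 0 < u) (q : ℝ) :
    u ^ q = t ^ q * (t / u) ^ (-q) := by
  have htq : 0 < t ^ q := rpow_pos_of_pos ht q
  rw [div_rpow ht.le hu.le, rpow_neg ht.le, rpow_neg hu.le]
  field_simp

lemma integrableOn_Ioo_of_norm_le_mul_exp {f : ℝ → ℝ} {A κ t : ℝ} (hκ : 0 < κ)
    (hf : AEStronglyMeasurable f (volume.restrict (Ioo 0 t)))
    (hle : ∀ s ∈ Ioo 0 t, ‖f s‖ ≤ A * exp (-κ * s)) : IntegrableOn f (Ioo 0 t) :=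
  Integrable.mono' (((exp_neg_integrableOn_Ioi 0 hκ).mono_set Ioo_subset_Ioi_self).const_mul A)
    hf (ae_restrict_of_forall_mem measurableSet_Ioo hle)

lemma setIntegral_Ioo_le_of_le_mul_exp {f : ℝ → ℝ} {A κ t : ℝ} (hκ : 0 < κ) (hA : 0 ≤ A)
    (hf0 : ∀ s ∈ Ioo 0 t, 0 ≤ f s) (hle : ∀ s ∈ Ioo 0 t, f s ≤ A * exp (-κ * s)) :
    ∫ s in Ioo 0 t, f s ≤ A / κ :=
  have hexp : IntegrableOn (fun s => A * exp (-κ * s)) (Ioi 0) :=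
    (exp_neg_integrableOn_Ioi 0 hκ).const_mul A
  calc ∫ s in Ioo 0 t, f s ≤ ∫ s in Ioo 0 t, A * exp (-κ * s) :=
        integral_mono_of_nonneg (ae_restrict_of_forall_mem measurableSet_Ioo hf0)
          (hexp.mono_set Ioo_subset_Ioi_self) (ae_restrict_of_forall_mem measurableSet_Ioo hle)
    _ ≤ ∫ s in Ioi 0, A * exp (-κ * s) :=
        setIntegral_mono_set hexp (ae_of_all _ fun s => by positivity)
          Ioo_subset_Ioi_self.eventuallyLE
    _ = A / κ := by
        rw [integral_const_mul, integral_exp_mul_Ioi (neg_neg_of_pos hκ)]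
        field_simp
        simp

noncomputable def heatIntegrand (μ q b t s : ℝ) : ℝ :=
  exp (μ * s) * (t - s) ^ q * exp (-b ^ 2 / (2 * (t - s)))

noncomputable def heatIntegral (μ q b t : ℝ) : ℝ :=
  ∫ s in Ioo 0 t, heatIntegrand μ q b t s

lemma exists_heatIntegrand_le {μ γ : ℝ} (hμ : 0 ≤ μ) (hμγ : μ < γ) (q : ℝ) :
    ∃ K κ, 0 < K ∧ 0 < κ ∧ ∀ t b s, 1 ≤ t → 2 * γ * t ^ 2 ≤ b ^ 2 → s ∈ Ioo 0 t →
      heatIntegrand μ q b t s ≤ K * (t ^ q * exp (-b ^ 2 / (2 * t))) * exp (-κ * s) := by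
  set κ := (γ - μ) / 2
  have hκ : 0 < κ := by simp only [κ]; linarith
  have hγμ : γ - μ = 2 * κ := by simp only [κ]; ring
  obtain ⟨C, hC0, hC⟩ := exists_rpow_mul_exp_neg_le (-q) hκ
  refine ⟨C * exp κ, κ, by positivity, hκ, fun t b s ht hb ⟨hs, hst⟩ => ?_⟩
  have hts : 0 < t - s := sub_pos.2 hst
  set x := t / (t - s)
  have hx : 1 ≤ x := by rw [le_div_iff₀ hts]; linarith
  -- `t * s / (t - s) = t * (x - 1)` dominates both `s` and `x - 1`
  have hsplit : κ * s + κ * x - κ ≤ (γ - μ) * (t * s / (t - s)) := by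
    have h1 : s ≤ t * s / (t - s) := by rw [le_div_iff₀ hts]; nlinarith
    have h2 : x - 1 ≤ t * s / (t - s) := by
      simp only [x]; rw [div_sub_one hts.ne', div_le_div_iff_of_pos_right hts]; nlinarith
    rw [hγμ]
    nlinarith [mul_le_mul_of_nonneg_left h1 hκ.le, mul_le_mul_of_nonneg_left h2 hκ.le]
  have hexp : μ * s + -b ^ 2 / (2 * (t - s))
      ≤ (-b ^ 2 / (2 * t) + -κ * s) + (-κ * x + κ) := by
    have := mul_sub_sq_div_le hμ hb hs hst
    simp only [neg_div] at this ⊢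
    linarith
  calc heatIntegrand μ q b t s
      = t ^ q * x ^ (-q) * exp (μ * s + -b ^ 2 / (2 * (t - s))) := by
        rw [heatIntegrand, rpow_eq_rpow_mul_div_rpow_neg (hs.trans hst) hts q, exp_add]
        ring
    _ ≤ t ^ q * x ^ (-q) * exp ((-b ^ 2 / (2 * t) + -κ * s) + (-κ * x + κ)) := by
        gcongr
    _ = x ^ (-q) * exp (-κ * x) * exp κ * (t ^ q * exp (-b ^ 2 / (2 * t))) * exp (-κ * s) := by
        simp only [exp_add]; ring
    _ ≤ C * exp κ * (t ^ q * exp (-b ^ 2 / (2 * t))) * exp (-κ * s) := by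
        gcongr; exact hC x hx

lemma le_heatIntegrand {μ q B t b s : ℝ} (hμ : 0 ≤ μ) (hq : q ≤ 0) (ht : 2 ≤ t)
    (hb : b ^ 2 ≤ B * t ^ 2) (hs : s ∈ Ioo 0 1) :
    exp (-B) * (t ^ q * exp (-b ^ 2 / (2 * t))) ≤ heatIntegrand μ q b t s := by
  obtain ⟨hs0, hs1⟩ := hs
  have hts : t / 2 ≤ t - s := by linarith
  have hts0 : 0 < t - s := by linarith
  have hB : 0 ≤ B := by nlinarith [sq_nonneg b, pow_pos (by linarith : (0:ℝ) < t) 2]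
  have hgap : -B ≤ b ^ 2 / (2 * t) - b ^ 2 / (2 * (t - s)) := by
    have : b ^ 2 / (2 * (t - s)) - b ^ 2 / (2 * t) = b ^ 2 * s / (2 * t * (t - s)) := by
      field_simp; ring
    have hle : b ^ 2 * s / (2 * t * (t - s)) ≤ B := by
      rw [div_le_iff₀ (by positivity)]
      nlinarith [mul_le_mul_of_nonneg_left hts (by positivity : 0 ≤ 2 * t * B),
        mul_le_mul_of_nonneg_left hs1.le (sq_nonneg b)]
    linarith
  have hexp : exp (-B) * exp (-b ^ 2 / (2 * t)) ≤ exp (-b ^ 2 / (2 * (t - s))) := by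
    rw [← exp_add, neg_div, neg_div]; gcongr; linarith
  have hpow : t ^ q ≤ (t - s) ^ q := rpow_le_rpow_of_nonpos hts0 (by linarith) hq
  calc exp (-B) * (t ^ q * exp (-b ^ 2 / (2 * t)))
      = 1 * t ^ q * (exp (-B) * exp (-b ^ 2 / (2 * t))) := by ring
    _ ≤ exp (μ * s) * (t - s) ^ q * exp (-b ^ 2 / (2 * (t - s))) := by
        gcongr
        exact one_le_exp (by positivity)

lemma measurable_heatIntegrand (μ q b t : ℝ) : Measurable (heatIntegrand μ q b t) := by
  unfold heatIntegrand; fun_prop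

lemma heatIntegrand_nonneg {μ q b t s : ℝ} (hst : s < t) : 0 ≤ heatIntegrand μ q b t s :=
  mul_nonneg (mul_nonneg (exp_pos _).le (rpow_nonneg (sub_pos.2 hst).le q)) (exp_pos _).le

lemma mul_le_heatIntegral {μ q B t b : ℝ} (hμ : 0 ≤ μ) (hq : q ≤ 0) (ht : 2 ≤ t)
    (hb : b ^ 2 ≤ B * t ^ 2) (hint : IntegrableOn (heatIntegrand μ q b t) (Ioo 0 t)) :
    exp (-B) * (t ^ q * exp (-b ^ 2 / (2 * t))) ≤ heatIntegral μ q b t := by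
  have hsub : Ioo (0 : ℝ) 1 ⊆ Ioo 0 t := Ioo_subset_Ioo_right (by linarith)
  calc exp (-B) * (t ^ q * exp (-b ^ 2 / (2 * t)))
      = ∫ _ in Ioo (0 : ℝ) 1, exp (-B) * (t ^ q * exp (-b ^ 2 / (2 * t))) := by simp
    _ ≤ ∫ s in Ioo 0 1, heatIntegrand μ q b t s :=
        setIntegral_mono_on (integrableOn_const measure_Ioo_lt_top.ne) (hint.mono_set hsub)
          measurableSet_Ioo fun s hs => le_heatIntegrand hμ hq ht hb hs
    _ ≤ heatIntegral μ q b t :=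
        setIntegral_mono_set hint
          (ae_restrict_of_forall_mem measurableSet_Ioo fun s hs => heatIntegrand_nonneg hs.2)
          hsub.eventuallyLE

theorem exists_heatIntegral_bounds {μ γ q : ℝ} (hμ : 0 ≤ μ) (hμγ : μ < γ) (hq : q ≤ 0)
    (B : ℝ) :
    ∃ K₁ K₂, 0 < K₁ ∧ 0 < K₂ ∧ ∀ t b, 2 ≤ t → 2 * γ * t ^ 2 ≤ b ^ 2 → b ^ 2 ≤ B * t ^ 2 →
      K₁ * (t ^ q * exp (-b ^ 2 / (2 * t))) ≤ heatIntegral μ q b t ∧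
        heatIntegral μ q b t ≤ K₂ * (t ^ q * exp (-b ^ 2 / (2 * t))) := by
  obtain ⟨K, κ, hK, hκ, hle⟩ := exists_heatIntegrand_le hμ hμγ q
  refine ⟨exp (-B), K / κ, exp_pos _, by positivity, fun t b ht hbγ hbB => ?_⟩
  have hle' : ∀ s ∈ Ioo 0 t,
      heatIntegrand μ q b t s ≤ K * (t ^ q * exp (-b ^ 2 / (2 * t))) * exp (-κ * s) :=
    fun s hs => hle t b s (by linarith) hbγ hs
  have hint : IntegrableOn (heatIntegrand μ q b t) (Ioo 0 t) :=
    integrableOn_Ioo_of_norm_le_mul_exp hκ (measurable_heatIntegrand μ q b t).aestronglyMeasurable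
      fun s hs => by rw [norm_of_nonneg (heatIntegrand_nonneg hs.2)]; exact hle' s hs
  refine ⟨mul_le_heatIntegral hμ hq ht hbB hint, ?_⟩
  have htq : 0 < t ^ q := rpow_pos_of_pos (by linarith) q
  calc heatIntegral μ q b t ≤ K * (t ^ q * exp (-b ^ 2 / (2 * t))) / κ :=
        setIntegral_Ioo_le_of_le_mul_exp hκ (by positivity)
          (fun s hs => heatIntegrand_nonneg hs.2) hle'
    _ = K / κ * (t ^ q * exp (-b ^ 2 / (2 * t))) := by ring

lemma eventually_mul_le_mul_add_le_mul {a : ℝ → ℝ}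
    (ha : Tendsto (fun t => a t / t) atTop (𝓝 0)) {c β C : ℝ} (hc : c < β) (hC : β < C) :
    ∀ᶠ t in atTop, c * t ≤ β * t + a t ∧ β * t + a t ≤ C * t := by
  have hlim : Tendsto (fun t => β + a t / t) atTop (𝓝 β) := by simpa using ha.const_add β
  filter_upwards [hlim.eventually (Ioo_mem_nhds hc hC), eventually_gt_atTop 0] with t ht ht0
  have hsplit : β * t + a t = (β + a t / t) * t := by field_simp
  rw [hsplit]
  exact ⟨by gcongr; exact ht.1.le, by gcongr; exact ht.2.le⟩

theorem exists_pow_mul_heatIntegral_bounds {μ c C q : ℝ} (hμ : 0 ≤ μ) (hc : 0 < c)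
    (hμc : 2 * μ < c ^ 2) (hcC : c ≤ C) (hq : q ≤ 0) (d : ℕ) :
    ∃ K₁ K₂, 0 < K₁ ∧ 0 < K₂ ∧ ∀ t b, 2 ≤ t → c * t ≤ b → b ≤ C * t →
      K₁ * (exp (-b ^ 2 / (2 * t)) * t ^ ((d : ℝ) + q)) ≤ b ^ d * heatIntegral μ q b t ∧
        b ^ d * heatIntegral μ q b t ≤ K₂ * (exp (-b ^ 2 / (2 * t)) * t ^ ((d : ℝ) + q)) := by
  obtain ⟨K₁, K₂, hK₁, hK₂, hK⟩ :=
    exists_heatIntegral_bounds hμ (by linarith : μ < c ^ 2 / 2) hq (C ^ 2)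
  refine ⟨c ^ d * K₁, C ^ d * K₂, by positivity, by have := hc.trans_le hcC; positivity,
    fun t b ht hcb hbC => ?_⟩
  have ht0 : 0 < t := by linarith
  have hb0 : 0 ≤ c * t := by positivity
  obtain ⟨hJlo, hJhi⟩ := hK t b ht (by nlinarith) (by nlinarith)
  have hJ : 0 ≤ heatIntegral μ q b t := le_trans (by positivity) hJlo
  rw [rpow_add ht0, rpow_natCast]
  constructor
  · calc c ^ d * K₁ * (exp (-b ^ 2 / (2 * t)) * (t ^ d * t ^ q))
        = (c * t) ^ d * (K₁ * (t ^ q * exp (-b ^ 2 / (2 * t)))) := by ring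
      _ ≤ b ^ d * heatIntegral μ q b t :=
        mul_le_mul (pow_le_pow_left₀ hb0 hcb d) hJlo (by positivity)
          (pow_nonneg (hb0.trans hcb) d)
  · calc b ^ d * heatIntegral μ q b t ≤ (C * t) ^ d * (K₂ * (t ^ q * exp (-b ^ 2 / (2 * t)))) :=
          mul_le_mul (pow_le_pow_left₀ (hb0.trans hcb) hbC d) hJhi hJ (pow_nonneg (by linarith) d)
      _ = C ^ d * K₂ * (exp (-b ^ 2 / (2 * t)) * (t ^ d * t ^ q)) := by ring

theorem integral_asymp_supercritical_general (d : ℕ) (l : ℝ) (hl : l < 0) (δ : ℝ) (ε₁ : ℝ)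
    (ε₂ : ℝ) (hε₂ : 0 < ε₂) (hδε : Real.sqrt (2 * (-l + ε₂)) < δ - ε₁)
    (a : ℝ → ℝ) (ha : Tendsto (fun t => a t / t) atTop (nhds 0))
    (R : ℝ → ℝ) (hR : ∀ t, R t = δ * t + a t) :
    ∃ T c₁ c₂ : ℝ, 0 < T ∧ 0 < c₁ ∧ 0 < c₂ ∧ ∀ t : ℝ, T ≤ t →
      c₁ * (Real.exp (-(R t - ε₁ * t) ^ 2 / (2 * t)) * t ^ (((d : ℝ) - 2) / 2))
          ≤ (R t - ε₁ * t) ^ (d : ℕ)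
            * ∫ s in Set.Ioo (0 : ℝ) t,
                Real.exp ((-l + ε₂) * s) * (t - s) ^ (-((d : ℝ) + 2) / 2)
                  * Real.exp (-(R t - ε₁ * t) ^ 2 / (2 * (t - s)))
        ∧ (R t - ε₁ * t) ^ (d : ℕ)
            * (∫ s in Set.Ioo (0 : ℝ) t,
                Real.exp ((-l + ε₂) * s) * (t - s) ^ (-((d : ℝ) + 2) / 2)
                  * Real.exp (-(R t - ε₁ * t) ^ 2 / (2 * (t - s))))
          ≤ c₂ * (Real.exp (-(R t - ε₁ * t) ^ 2 / (2 * t)) * t ^ (((d : ℝ) - 2) / 2)) := by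
  set μ := -l + ε₂
  set β := δ - ε₁
  have hμ : 0 ≤ μ := by linarith
  obtain ⟨c, hμc, hcβ⟩ := exists_between hδε
  have hc : 0 < c := (sqrt_nonneg _).trans_lt hμc
  obtain ⟨K₁, K₂, hK₁, hK₂, hK⟩ := exists_pow_mul_heatIntegral_bounds hμ hc
    ((sqrt_lt' hc).1 hμc) (by linarith : c ≤ 2 * β)
    (by have : (0 : ℝ) ≤ d := d.cast_nonneg; linarith : -((d : ℝ) + 2) / 2 ≤ 0) d
  obtain ⟨T, hT⟩ :=
    eventually_atTop.1 (eventually_mul_le_mul_add_le_mul ha hcβ (by linarith : β < 2 * β))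
  refine ⟨max T 2, K₁, K₂, by positivity, hK₁, hK₂, fun t ht => ?_⟩
  obtain ⟨hlo, hhi⟩ := hT t (le_of_max_le_left ht)
  have hb : R t - ε₁ * t = β * t + a t := by rw [hR]; ring
  have hexp : (d : ℝ) + -((d : ℝ) + 2) / 2 = ((d : ℝ) - 2) / 2 := by ring
  rw [hb, ← hexp]
  exact hK t _ (le_of_max_le_right ht) hlo hhi

/-- Let `d ≥ 1`, `λ < 0`, `δ > √(−2λ)`, `ε₁ ∈ (0, δ − √(−2λ))`, `ε₂ > 0` with
`δ − ε₁ > √(2(−λ + ε₂))`, `a(t) = o(t)` and `R(t) = δt + a(t)`. Then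
`I(t) = (R(t) − ε₁t)^d ∫₀^t e^{(−λ+ε₂)s} (t−s)^{−(d+2)/2} exp(−(R(t)−ε₁t)²/(2(t−s))) ds`
satisfies `I(t) ≍ e^{−(R(t)−ε₁t)²/(2t)} t^{(d−2)/2}` as `t → ∞`. -/
theorem integral_asymp_supercritical (d : ℕ) (hd : 1 ≤ d) (l : ℝ) (hl : l < 0)
    (δ : ℝ) (hδ : Real.sqrt (-2 * l) < δ)
    (ε₁ : ℝ) (hε₁ : ε₁ ∈ Set.Ioo 0 (δ - Real.sqrt (-2 * l)))
    (ε₂ : ℝ) (hε₂ : 0 < ε₂) (hδε : Real.sqrt (2 * (-l + ε₂)) < δ - ε₁)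
    (a : ℝ → ℝ) (ha : Tendsto (fun t => a t / t) atTop (nhds 0))
    (R : ℝ → ℝ) (hR : ∀ t, R t = δ * t + a t) :
    ∃ T c₁ c₂ : ℝ, 0 < T ∧ 0 < c₁ ∧ 0 < c₂ ∧ ∀ t : ℝ, T ≤ t →
      c₁ * (Real.exp (-(R t - ε₁ * t) ^ 2 / (2 * t)) * t ^ (((d : ℝ) - 2) / 2))
          ≤ (R t - ε₁ * t) ^ (d : ℕ)
            * ∫ s in Set.Ioo (0 : ℝ) t,
                Real.exp ((-l + ε₂) * s) * (t - s) ^ (-((d : ℝ) + 2) / 2)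
                  * Real.exp (-(R t - ε₁ * t) ^ 2 / (2 * (t - s)))
        ∧ (R t - ε₁ * t) ^ (d : ℕ)
            * (∫ s in Set.Ioo (0 : ℝ) t,
                Real.exp ((-l + ε₂) * s) * (t - s) ^ (-((d : ℝ) + 2) / 2)
                  * Real.exp (-(R t - ε₁ * t) ^ 2 / (2 * (t - s))))
          ≤ c₂ * (Real.exp (-(R t - ε₁ * t) ^ 2 / (2 * t)) * t ^ (((d : ℝ) - 2) / 2)) :=
  integral_asymp_supercritical_general d l hl δ ε₁ ε₂ hε₂ hδε a ha R hR
end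

section
/- For every integer d ≥ 1 and all reals b > 0, c > 0, t > 0, the following change-of-variables identity holds: ∫₀^t e^{cs} (t − s)^{−(d+2)/2} exp(−b²/(2(t − s))) ds = 2 e^{ct − √(2c)·b} ∫_{−∞}^{S} e^{−w²} · F(w)^d / √(w² + 2√(2c)·b) dw, where F(w) = 2√c / (w + √(w² + 2√(2c)·b)) and S = √(ct) − b/√(2t). -/
/-!
Substitute `s = t - v` and then `w = X - Y` with `X = √(c v)`, `Y = b / √(2 v)`. The product
`X Y = √(2c) b / 2` does not depend on `v`, so `w² + 2√(2c) b = (X + Y)²` and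
`w + √(w² + 2√(2c) b) = 2X`, whence `F(w) = 1 / √v`, while `dw/dv = (X + Y) / (2v)`. The factor
`X + Y` cancels, and `-w² = √(2c) b - c v - b² / (2v)` produces the exponentials. Since
`v ↦ X - Y` is increasing and `x ↦ x - k / x` maps `(0, ∞)` onto `ℝ` for `k > 0`, the interval
`(0, t)` is mapped onto `(-∞, S)`.
-/

open Real MeasureTheory Set

lemma exists_pos_sub_div_eq {k : ℝ} (hk : 0 < k) (w : ℝ) : ∃ x, 0 < x ∧ x - k / x = w := by
  set A := √(w ^ 2 + 4 * k)
  have hA : A ^ 2 = w ^ 2 + 4 * k := sq_sqrt (by positivity)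
  have hwA : 0 < w + A := by nlinarith [sqrt_nonneg (w ^ 2 + 4 * k)]
  refine ⟨(w + A) / 2, by positivity, ?_⟩
  field_simp
  linear_combination hA

lemma rpow_neg_natCast_add_two_div_two {v : ℝ} (hv : 0 < v) (d : ℕ) :
    v ^ (-((d : ℝ) + 2) / 2) = (v * √v ^ d)⁻¹ := by
  rw [neg_div, rpow_neg hv.le, add_div, div_self two_ne_zero, rpow_add_one hv.ne', sqrt_eq_rpow,
    ← rpow_natCast, ← rpow_mul hv.le, mul_comm, one_div_mul_eq_div]

lemma setIntegral_Ioo_comp_sub_left {E : Type*} [NormedAddCommGroup E] [NormedSpace ℝ E]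
    (f : ℝ → E) {t : ℝ} (ht : 0 ≤ t) :
    ∫ v in Ioo 0 t, f (t - v) = ∫ s in Ioo 0 t, f s := by
  simp only [← integral_Ioc_eq_integral_Ioo, ← intervalIntegral.integral_of_le ht,
    intervalIntegral.integral_comp_sub_left, sub_self, sub_zero]

noncomputable def changeVar (c b v : ℝ) : ℝ := √(c * v) - b / √(2 * v)

noncomputable def transformedIntegrand (d : ℕ) (b c w : ℝ) : ℝ :=
  exp (-w ^ 2) * (2 * √c / (w + √(w ^ 2 + 2 * √(2 * c) * b))) ^ d
    / √(w ^ 2 + 2 * √(2 * c) * b)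

section
variable {b c v : ℝ}

lemma sqrt_mul_mul_div_sqrt_two_mul (hc : 0 ≤ c) (hv : 0 < v) :
    √(c * v) * (b / √(2 * v)) = √(2 * c) * b / 2 := by
  have h : √(2 * c) * √(2 * v) = 2 * √(c * v) := by
    rw [← sqrt_mul (by positivity), show 2 * c * (2 * v) = 2 ^ 2 * (c * v) by ring,
      sqrt_mul (by positivity), sqrt_sq zero_le_two]
  rw [mul_div_assoc', div_eq_div_iff (sqrt_pos.2 (by positivity)).ne' two_ne_zero]
  linear_combination -b * h

lemma hasDerivAt_changeVar (hc : 0 < c) (hv : 0 < v) :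
    HasDerivAt (changeVar c b) ((√(c * v) + b / √(2 * v)) / (2 * v)) v := by
  have hcv : 0 < c * v := by positivity
  have h2v : 0 < 2 * v := by positivity
  have h1 := ((hasDerivAt_id' v).const_mul c).sqrt hcv.ne'
  have h2 := ((((hasDerivAt_id' v).const_mul 2).sqrt h2v.ne').fun_inv
    (sqrt_pos.2 h2v).ne').const_mul b
  refine (h1.fun_sub h2).congr_deriv ?_
  rw [sq_sqrt h2v.le]
  field_simp
  linear_combination -√(2 * v) * mul_self_sqrt hcv.le

lemma strictMonoOn_changeVar (hc : 0 < c) (hb : 0 ≤ b) :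
    StrictMonoOn (changeVar c b) (Ioi 0) := by
  intro v₁ (hv₁ : 0 < v₁) v₂ (hv₂ : 0 < v₂) hlt
  have h1 : √(c * v₁) < √(c * v₂) := sqrt_lt_sqrt (by positivity) (by nlinarith)
  have h2 : b / √(2 * v₂) ≤ b / √(2 * v₁) := by gcongr
  simp only [changeVar]
  linarith

lemma changeVar_image_Ioo (hb : 0 < b) (hc : 0 < c) {t : ℝ} (ht : 0 < t) :
    changeVar c b '' Ioo 0 t = Iio (changeVar c b t) := by
  have hmono := strictMonoOn_changeVar hc hb.le
  refine Subset.antisymm (image_subset_iff.2 fun v hv => hmono hv.1 ht hv.2) fun w hw => ?_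
  obtain ⟨x, hx, hxw⟩ := exists_pos_sub_div_eq (by positivity : 0 < √(2 * c) * b / 2) w
  have hv : 0 < x ^ 2 / c := by positivity
  have hX : √(c * (x ^ 2 / c)) = x := by
    rw [mul_div_cancel₀ _ hc.ne', sqrt_sq hx.le]
  have hY : b / √(2 * (x ^ 2 / c)) = √(2 * c) * b / 2 / x := by
    rw [← sqrt_mul_mul_div_sqrt_two_mul hc.le hv, hX, mul_div_cancel_left₀ _ hx.ne']
  have hgw : changeVar c b (x ^ 2 / c) = w := by rw [changeVar, hX, hY, hxw]
  refine ⟨x ^ 2 / c, ⟨hv, ?_⟩, hgw⟩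
  by_contra! htv
  have := hmono.monotoneOn ht hv htv
  rw [hgw] at this
  exact (not_lt.2 this) hw

lemma transformedIntegrand_changeVar (hb : 0 ≤ b) (hc : 0 < c) (hv : 0 < v) (d : ℕ) :
    transformedIntegrand d b c (changeVar c b v)
      = exp (-(c * v + b ^ 2 / (2 * v) - √(2 * c) * b))
          / (√v ^ d * (√(c * v) + b / √(2 * v))) := by
  set X := √(c * v)
  set Y := b / √(2 * v)
  have hXY : X * Y = √(2 * c) * b / 2 := sqrt_mul_mul_div_sqrt_two_mul hc.le hv
  have hX : 0 < X := sqrt_pos.2 (by positivity)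
  have hY : 0 ≤ Y := by positivity
  have hsq : (X - Y) ^ 2 = c * v + b ^ 2 / (2 * v) - √(2 * c) * b := by
    rw [sub_sq, mul_assoc, hXY, sq_sqrt (by positivity), div_pow, sq_sqrt (by positivity)]
    ring
  have hroot : √((X - Y) ^ 2 + 2 * √(2 * c) * b) = X + Y := by
    rw [show (X - Y) ^ 2 + 2 * √(2 * c) * b = (X + Y) ^ 2 by linear_combination -4 * hXY,
      sqrt_sq (by positivity)]
  have hfrac : 2 * √c / (X - Y + (X + Y)) = (√v)⁻¹ := by
    have : 0 < √v := sqrt_pos.2 hv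
    rw [show X - Y + (X + Y) = 2 * X by ring, show X = √c * √v from sqrt_mul hc.le v]
    field_simp
  rw [transformedIntegrand, changeVar, hroot, hfrac, hsq, inv_pow, ← div_eq_mul_inv, div_div]

lemma two_mul_exp_mul_abs_deriv_mul_transformedIntegrand (hb : 0 ≤ b) (hc : 0 < c)
    (hv : 0 < v) (d : ℕ) (t : ℝ) :
    2 * exp (c * t - √(2 * c) * b)
        * (|(√(c * v) + b / √(2 * v)) / (2 * v)| * transformedIntegrand d b c (changeVar c b v))
      = exp (c * (t - v)) * v ^ (-((d : ℝ) + 2) / 2) * exp (-b ^ 2 / (2 * v)) := by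
  have hexp : exp (c * t - √(2 * c) * b) * exp (-(c * v + b ^ 2 / (2 * v) - √(2 * c) * b))
      = exp (c * (t - v)) * exp (-b ^ 2 / (2 * v)) := by
    rw [← exp_add, ← exp_add]
    ring_nf
  have : 0 < √(c * v) + b / √(2 * v) := by positivity
  rw [transformedIntegrand_changeVar hb hc hv, abs_of_pos (by positivity),
    rpow_neg_natCast_add_two_div_two hv, mul_right_comm (exp _), ← hexp]
  field_simp

end

theorem change_of_variables_identity_general (d : ℕ) (b c t : ℝ)
    (hb : 0 < b) (hc : 0 < c) (ht : 0 < t) :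
    (∫ s in Set.Ioo (0 : ℝ) t,
        Real.exp (c * s) * (t - s) ^ (-((d : ℝ) + 2) / 2) * Real.exp (-b ^ 2 / (2 * (t - s))))
      = 2 * Real.exp (c * t - Real.sqrt (2 * c) * b)
        * ∫ w in Set.Iio (Real.sqrt (c * t) - b / Real.sqrt (2 * t)),
            Real.exp (-w ^ 2)
              * (2 * Real.sqrt c / (w + Real.sqrt (w ^ 2 + 2 * Real.sqrt (2 * c) * b))) ^ (d : ℕ)
              / Real.sqrt (w ^ 2 + 2 * Real.sqrt (2 * c) * b) := by
  have hderiv : ∀ v ∈ Ioo 0 t, HasDerivWithinAt (changeVar c b)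
      ((√(c * v) + b / √(2 * v)) / (2 * v)) (Ioo 0 t) v :=
    fun v hv => (hasDerivAt_changeVar hc hv.1).hasDerivWithinAt
  have hinj : InjOn (changeVar c b) (Ioo 0 t) :=
    (strictMonoOn_changeVar hc hb.le).injOn.mono Ioo_subset_Ioi_self
  rw [← setIntegral_Ioo_comp_sub_left _ ht.le]
  change _ = 2 * _ * ∫ w in Iio (changeVar c b t), transformedIntegrand d b c w
  rw [← changeVar_image_Ioo hb hc ht,
    integral_image_eq_integral_abs_deriv_smul measurableSet_Ioo hderiv hinj, ← integral_const_mul]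
  refine setIntegral_congr_fun measurableSet_Ioo fun v hv => ?_
  rw [smul_eq_mul, two_mul_exp_mul_abs_deriv_mul_transformedIntegrand hb.le hc hv.1,
    sub_sub_cancel]

/-- For every `d ≥ 1` and all reals `b > 0`, `c > 0`, `t > 0`:
`∫₀^t e^{cs} (t−s)^{−(d+2)/2} exp(−b²/(2(t−s))) ds
  = 2 e^{ct − √(2c) b} ∫_{−∞}^{S} e^{−w²} F(w)^d / √(w² + 2√(2c) b) dw`,
where `F(w) = 2√c / (w + √(w² + 2√(2c) b))` and `S = √(ct) − b/√(2t)`. -/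
theorem change_of_variables_identity (d : ℕ) (hd : 1 ≤ d) (b c t : ℝ)
    (hb : 0 < b) (hc : 0 < c) (ht : 0 < t) :
    (∫ s in Set.Ioo (0 : ℝ) t,
        Real.exp (c * s) * (t - s) ^ (-((d : ℝ) + 2) / 2) * Real.exp (-b ^ 2 / (2 * (t - s))))
      = 2 * Real.exp (c * t - Real.sqrt (2 * c) * b)
        * ∫ w in Set.Iio (Real.sqrt (c * t) - b / Real.sqrt (2 * t)),
            Real.exp (-w ^ 2)
              * (2 * Real.sqrt c / (w + Real.sqrt (w ^ 2 + 2 * Real.sqrt (2 * c) * b))) ^ (d : ℕ)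
              / Real.sqrt (w ^ 2 + 2 * Real.sqrt (2 * c) * b) :=
  change_of_variables_identity_general d b c t hb hc ht
end

section
/- For all real numbers a, b with 0 < a ≤ b, lim inf_{t→∞} (1/t) · log(1 − (1 − e^{−bt})^{exp(at)}) ≥ a − b. -/
/-! With `u = e^{-bt}` and `N = e^{at}` we have `uN = e^{(a-b)t} ≤ 1`, and
`(1 - u)^N ≤ e^{-uN} ≤ 1 - (1 - e⁻¹) uN` by `1 - u ≤ e^{-u}` and convexity of `exp` on `[-1, 0]`.
Hence `log (1 - (1 - u)^N) ≥ log (1 - e⁻¹) + (a - b) t`, and dividing by `t` gives the bound. -/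

open Real Filter

lemma one_sub_rpow_le_exp_neg_mul {u N : ℝ} (hu : u ≤ 1) (hN : 0 ≤ N) :
    (1 - u) ^ N ≤ exp (-(u * N)) := by
  rw [← neg_mul, exp_mul]
  exact rpow_le_rpow (sub_nonneg.2 hu) (one_sub_le_exp_neg u) hN

lemma exp_neg_le_one_sub_mul {x : ℝ} (hx0 : 0 ≤ x) (hx1 : x ≤ 1) :
    exp (-x) ≤ 1 - (1 - exp (-1)) * x := by
  have h := convexOn_exp.2 (Set.mem_univ (-1 : ℝ)) (Set.mem_univ 0) hx0 (sub_nonneg.2 hx1)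
    (by ring)
  simp only [smul_eq_mul, mul_zero, add_zero, mul_neg, mul_one, exp_zero] at h
  linarith

lemma mul_le_one_sub_one_sub_rpow {u N : ℝ} (hu0 : 0 ≤ u) (hu : u ≤ 1) (hN : 0 ≤ N)
    (huN : u * N ≤ 1) : (1 - exp (-1)) * (u * N) ≤ 1 - (1 - u) ^ N := by
  linarith [one_sub_rpow_le_exp_neg_mul hu hN, exp_neg_le_one_sub_mul (by positivity) huN]

section

variable {a b t : ℝ}

lemma log_one_sub_one_sub_rpow_exp_nonpos (hb : 0 < b) (ht : 0 < t) :
    log (1 - (1 - exp (-b * t)) ^ exp (a * t)) ≤ 0 := by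
  have hu1 : exp (-b * t) ≤ 1 := exp_le_one_iff.2 (by nlinarith)
  have hpow : 0 ≤ (1 - exp (-b * t)) ^ exp (a * t) := rpow_nonneg (sub_nonneg.2 hu1) _
  have hpow1 : (1 - exp (-b * t)) ^ exp (a * t) ≤ 1 :=
    rpow_le_one (sub_nonneg.2 hu1) (by linarith [exp_pos (-b * t)]) (exp_pos _).le
  exact log_nonpos (by linarith) (by linarith)

lemma log_one_sub_exp_neg_one_add_le (hb : 0 < b) (hab : a ≤ b) (ht : 0 < t) :
    log (1 - exp (-1)) + (a - b) * t ≤ log (1 - (1 - exp (-b * t)) ^ exp (a * t)) := by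
  have hc : 0 < 1 - exp (-1) := sub_pos.2 (exp_lt_one_iff.2 (by norm_num))
  have huN : exp (-b * t) * exp (a * t) = exp ((a - b) * t) := by rw [← exp_add]; ring_nf
  have hbound := mul_le_one_sub_one_sub_rpow (exp_pos (-b * t)).le
    (exp_le_one_iff.2 (by nlinarith)) (exp_pos (a * t)).le (huN ▸ exp_le_one_iff.2 (by nlinarith))
  rw [huN] at hbound
  calc log (1 - exp (-1)) + (a - b) * t = log ((1 - exp (-1)) * exp ((a - b) * t)) := by
        rw [log_mul hc.ne' (exp_pos _).ne', log_exp]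
    _ ≤ _ := log_le_log (by positivity) hbound

end

/-- For all reals `0 < a ≤ b`:
`liminf_{t→∞} (1/t) log(1 − (1 − e^{−bt})^{exp(at)}) ≥ a − b`. -/
theorem liminf_log_one_sub_pow (a b : ℝ) (ha : 0 < a) (hab : a ≤ b) :
    a - b ≤ Filter.liminf
      (fun t : ℝ => (1 / t) * Real.log (1 - (1 - Real.exp (-b * t)) ^ Real.exp (a * t)))
      Filter.atTop := by
  have hb : 0 < b := ha.trans_le hab
  have hlower : Tendsto (fun t : ℝ => log (1 - exp (-1)) / t + (a - b)) atTop (nhds (a - b)) := by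
    simpa using (tendsto_const_nhds.div_atTop tendsto_id).add (tendsto_const_nhds (x := a - b))
  rw [← hlower.liminf_eq]
  refine liminf_le_liminf ?_ hlower.isBoundedUnder_ge
    (isBoundedUnder_of_eventually_le (a := 0) ?_).isCoboundedUnder_ge
  all_goals filter_upwards [eventually_gt_atTop 0] with t ht
  · calc log (1 - exp (-1)) / t + (a - b) = (1 / t) * (log (1 - exp (-1)) + (a - b) * t) := by
          field_simp
      _ ≤ _ := by gcongr; exact log_one_sub_exp_neg_one_add_le hb hab ht
  · exact mul_nonpos_of_nonneg_of_nonpos (by positivity)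
      (log_one_sub_one_sub_rpow_exp_nonpos hb ht)
end

section
/- For all reals a > 0, β > 0 and γ > 0, the equation A² − (β − γ)A = βγ(1 − e^{−2aA}) has a solution A > 0 if and only if β > γ/(1 + 2aγ). -/
/-!
Write `c = β (1 + 2aγ) - γ` and `F(A) = A² - (β - γ)A - βγ(1 - e^{-2aA})`. Since `1 - e^{-x} < x`
for `x > 0`, we have `F(A) > A (A - c)` for every `A > 0`: so `F` has no positive zero when
`c ≤ 0`, and `F(c) > 0` when `c > 0`. In the latter case `F(0) = 0` and `F'(0) = -c < 0`, so `F`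
is negative just to the right of `0`, and the intermediate value theorem produces a zero.
-/

open Real

theorem exists_lt_of_hasDerivAt_neg {f : ℝ → ℝ} {f' x : ℝ} (hf : HasDerivAt f f' x)
    (hf' : f' < 0) : ∃ y, x < y ∧ f y < f x := by
  obtain ⟨t, hslope, ht⟩ :=
    ((hf.tendsto_slope_zero_right.eventually (gt_mem_nhds hf')).and self_mem_nhdsWithin).exists
  refine ⟨x + t, lt_add_of_pos_right x ht, ?_⟩
  rw [smul_eq_mul] at hslope
  have := mul_neg_of_pos_of_neg ht hslope
  rwa [mul_inv_cancel_left₀ ht.ne', sub_neg] at this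

noncomputable def secularFn (a β γ A : ℝ) : ℝ :=
  A ^ 2 - (β - γ) * A - β * γ * (1 - exp (-2 * a * A))

variable {a β γ : ℝ}

theorem continuous_secularFn : Continuous (secularFn a β γ) := by
  unfold secularFn; fun_prop

theorem secularFn_zero : secularFn a β γ 0 = 0 := by
  simp [secularFn]

theorem hasDerivAt_secularFn_zero :
    HasDerivAt (secularFn a β γ) (-(β * (1 + 2 * a * γ) - γ)) 0 := by
  have hexp : HasDerivAt (fun A => exp (-2 * a * A)) (-2 * a) 0 := by
    simpa using ((hasDerivAt_id (0 : ℝ)).const_mul (-2 * a)).exp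
  refine (((hasDerivAt_pow 2 (0 : ℝ)).sub ((hasDerivAt_id 0).const_mul (β - γ))).sub
    ((hexp.const_sub 1).const_mul (β * γ))).congr_deriv ?_
  norm_num
  ring

theorem mul_sub_lt_secularFn (ha : 0 < a) (hβ : 0 < β) (hγ : 0 < γ) {A : ℝ} (hA : 0 < A) :
    A * (A - (β * (1 + 2 * a * γ) - γ)) < secularFn a β γ A := by
  have hexp : 1 - exp (-2 * a * A) < 2 * a * A := by
    linarith [add_one_lt_exp (x := -2 * a * A) (by nlinarith)]
  have := mul_lt_mul_of_pos_left hexp (mul_pos hβ hγ)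
  unfold secularFn
  nlinarith

/-- For all reals `a > 0`, `β > 0`, `γ > 0`, the equation
`A² − (β − γ)A = βγ(1 − e^{−2aA})` has a solution `A > 0` iff `β > γ/(1 + 2aγ)`. -/
theorem positive_solution_iff (a β γ : ℝ) (ha : 0 < a) (hβ : 0 < β) (hγ : 0 < γ) :
    (∃ A : ℝ, 0 < A ∧ A ^ 2 - (β - γ) * A = β * γ * (1 - Real.exp (-2 * a * A)))
      ↔ γ / (1 + 2 * a * γ) < β := by
  have hden : 0 < 1 + 2 * a * γ := by positivity
  rw [div_lt_iff₀ hden, ← sub_pos]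
  set c := β * (1 + 2 * a * γ) - γ
  have hF {A : ℝ} (hA : 0 < A) : A * (A - c) < secularFn a β γ A :=
    mul_sub_lt_secularFn ha hβ hγ hA
  constructor
  · rintro ⟨A, hA, hroot⟩
    have : A * (A - c) < 0 := by
      simpa [secularFn, hroot] using hF hA
    linarith [neg_of_mul_neg_right this hA.le]
  · intro hc
    obtain ⟨y, hy, hFy⟩ := exists_lt_of_hasDerivAt_neg hasDerivAt_secularFn_zero (neg_neg_of_pos hc)
    rw [secularFn_zero] at hFy
    have hyc : y ≤ c := by
      by_contra! hcy
      nlinarith [hF hy]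
    have hFc : 0 ≤ secularFn a β γ c := by
      simpa using (hF hc).le
    obtain ⟨A, ⟨hyA, -⟩, hroot⟩ := intermediate_value_Icc hyc continuous_secularFn.continuousOn
      ⟨hFy.le, hFc⟩
    exact ⟨A, hy.trans_le hyA, by simpa [secularFn, sub_eq_zero] using hroot⟩
end
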